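/- In the conversion model with download sizes, the read bandwidth cost satisfies γ_R ≥ λ · min{g^F, r} · α. -/

import Mathlib

/-!
Fix an initial codeword `t` and a set `S` of `min(g^F, r)` information nodes inside one local
group of `t`. The information outside `S` determines every download from the other codewords
(through the initial global parities) and every local parity outside the group of `S`; together
with the downloads `D_t` from codeword `t` it therefore determines all downloads, hence the final
global parities. Erasing `S` and the `l` local parities of its group is within the
optimal-distance budget `g^F + l`, so `X_S` is a function of `(D_t, X_{S^c})`. With independence,
`|S| α = H(X_S | X_{S^c}) ≤ H(D_t) ≤` (read cost of codeword `t`); summing over the `λ` codewords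
gives the bound.
-/

open Finset

open scoped Classical in
/-- Probability that the random variable `X` takes the value `s`, under the
probability mass function `p` on the finite sample space `Ω`. -/
noncomputable def prEq {Ω : Type*} [Fintype Ω] {S : Type*} (p : Ω → ℝ) (X : Ω → S) (s : S) : ℝ :=
  ∑ ω, if X ω = s then p ω else 0

/-- Shannon entropy `H(X)` of the random variable `X` under the pmf `p`. -/
noncomputable def entropy {Ω : Type*} [Fintype Ω] {S : Type*} (p : Ω → ℝ) (X : Ω → S) : ℝ :=
  -∑ ω, p ω * Real.log (prEq p X (X ω))

/-- Conditional entropy `H(X | Y) = H(X, Y) - H(Y)`. -/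
noncomputable def condEntropy {Ω : Type*} [Fintype Ω] {S T : Type*}
    (p : Ω → ℝ) (X : Ω → S) (Y : Ω → T) : ℝ :=
  entropy p (fun ω => (X ω, Y ω)) - entropy p Y

/-- Conditional mutual information `I(X ; Y | Z) = H(X|Z) + H(Y|Z) - H(X,Y|Z)`. -/
noncomputable def condMI {Ω : Type*} [Fintype Ω] {S T U : Type*}
    (p : Ω → ℝ) (X : Ω → S) (Y : Ω → T) (Z : Ω → U) : ℝ :=
  condEntropy p X Z + condEntropy p Y Z - condEntropy p (fun ω => (X ω, Y ω)) Z

/-- The tuple of random variables `(Z i)_{i ∈ A}`, as a single random variable. -/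
def tupleOn {Ω : Type*} {ι : Type*} {S : ι → Type*}
    (Z : (i : ι) → Ω → S i) (A : Finset ι) (ω : Ω) :
    ∀ i : {x : ι // x ∈ A}, S i.1 := fun i => Z i.1 ω

open scoped Classical

section Entropy

variable {Ω S T R : Type*} [Fintype Ω] {p : Ω → ℝ}

lemma prEq_nonneg (hp0 : ∀ ω, 0 ≤ p ω) (X : Ω → S) (s : S) : 0 ≤ prEq p X s :=
  sum_nonneg fun ω _ => ite_nonneg (hp0 ω) le_rfl

lemma prEq_mono (hp0 : ∀ ω, 0 ≤ p ω) {X : Ω → S} {Y : Ω → T} {x : S} {y : T}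
    (h : ∀ ω, X ω = x → Y ω = y) : prEq p X x ≤ prEq p Y y :=
  sum_le_sum fun ω _ => by
    by_cases hx : X ω = x
    · simp [hx, h ω hx]
    · simp [hx, ite_nonneg (hp0 ω) le_rfl]

lemma prEq_pos (hp0 : ∀ ω, 0 ≤ p ω) (X : Ω → S) {ω : Ω} (hω : p ω ≠ 0) :
    0 < prEq p X (X ω) := by
  refine lt_of_lt_of_le ((hp0 ω).lt_of_ne' hω) ?_
  simpa [prEq] using single_le_sum (f := fun ω' => if X ω' = X ω then p ω' else 0)
    (fun ω' _ => ite_nonneg (hp0 ω') le_rfl) (mem_univ ω)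

lemma entropy_congr {X : Ω → S} {Y : Ω → T} (h : ∀ ω ω', X ω' = X ω ↔ Y ω' = Y ω) :
    entropy p X = entropy p Y := by
  have hpr : ∀ ω, prEq p X (X ω) = prEq p Y (Y ω) := fun ω =>
    sum_congr rfl fun ω' _ => if_congr (h ω ω') rfl rfl
  simp only [entropy, hpr]

lemma entropy_eq_zero_of_const (hp1 : ∑ ω, p ω = 1) {X : Ω → S} (h : ∀ ω ω', X ω' = X ω) :
    entropy p X = 0 := by
  have hpr : ∀ ω, prEq p X (X ω) = 1 := fun ω =>
    (sum_congr rfl fun ω' _ => if_pos (h ω ω')).trans hp1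
  simp [entropy, hpr]

lemma entropy_le_of_determinedermined (hp0 : ∀ ω, 0 ≤ p ω) {X : Ω → S} {Y : Ω → T}
    (h : ∀ ω ω', Y ω' = Y ω → X ω' = X ω) : entropy p X ≤ entropy p Y := by
  refine neg_le_neg (sum_le_sum fun ω _ => ?_)
  rcases (hp0 ω).eq_or_lt with hpω | hpω
  · simp [← hpω]
  · exact mul_le_mul_of_nonneg_left
      (Real.log_le_log (prEq_pos hp0 Y hpω.ne') (prEq_mono hp0 (h ω))) hpω.le

lemma sum_mul_comp_eq_sum_prEq [DecidableEq S] (X : Ω → S) (g : S → ℝ) :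
    ∑ ω, p ω * g (X ω) = ∑ s ∈ univ.image X, prEq p X s * g s := by
  rw [← sum_fiberwise_of_maps_to (g := X) fun ω _ => mem_image_of_mem X (mem_univ ω)]
  refine sum_congr rfl fun s _ => ?_
  rw [prEq, sum_mul, sum_filter]
  refine sum_congr rfl fun ω _ => ?_
  split_ifs <;> simp_all

lemma sum_prEq_image [DecidableEq S] (hp1 : ∑ ω, p ω = 1) (X : Ω → S) :
    ∑ s ∈ univ.image X, prEq p X s = 1 := by
  simpa [hp1] using (sum_mul_comp_eq_sum_prEq (p := p) X fun _ => 1).symm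

lemma sum_mul_div_prEq_le [DecidableEq S] (hp0 : ∀ ω, 0 ≤ p ω) (X : Ω → S) {g : S → ℝ}
    (hg : ∀ s, 0 ≤ g s) :
    ∑ ω, p ω * (g (X ω) / prEq p X (X ω)) ≤ ∑ s ∈ univ.image X, g s := by
  rw [sum_mul_comp_eq_sum_prEq X fun s => g s / prEq p X s]
  refine sum_le_sum fun s _ => ?_
  rcases (prEq_nonneg hp0 X s).eq_or_lt with h | h
  · simp [← h, hg s]
  · rw [mul_div_cancel₀ _ h.ne']

lemma entropy_pair_le_add (hp0 : ∀ ω, 0 ≤ p ω) (hp1 : ∑ ω, p ω = 1) (X : Ω → S) (Y : Ω → T) :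
    entropy p (fun ω => (X ω, Y ω)) ≤ entropy p X + entropy p Y := by
  set qX := prEq p X
  set qY := prEq p Y
  set qXY := prEq p fun ω => (X ω, Y ω)
  have hprod : ∑ ω, p ω * (qX (X ω) * qY (Y ω) / qXY (X ω, Y ω)) ≤ 1 := by
    have hnonneg : ∀ v : S × T, 0 ≤ qX v.1 * qY v.2 := fun v =>
      mul_nonneg (prEq_nonneg hp0 X v.1) (prEq_nonneg hp0 Y v.2)
    have hsub : univ.image (fun ω => (X ω, Y ω)) ⊆ univ.image X ×ˢ univ.image Y := by
      simp only [subset_iff, mem_image, mem_univ, true_and, mem_product]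
      rintro _ ⟨ω, rfl⟩
      exact ⟨⟨ω, rfl⟩, ⟨ω, rfl⟩⟩
    calc _ ≤ ∑ v ∈ univ.image (fun ω => (X ω, Y ω)), qX v.1 * qY v.2 :=
          sum_mul_div_prEq_le hp0 (fun ω => (X ω, Y ω)) hnonneg
      _ ≤ ∑ v ∈ univ.image X ×ˢ univ.image Y, qX v.1 * qY v.2 :=
          sum_le_sum_of_subset_of_nonneg hsub fun v _ _ => hnonneg v
      _ = 1 := by rw [sum_product, ← sum_mul_sum, sum_prEq_image hp1, sum_prEq_image hp1, one_mul]
  -- Gibbs: `log x ≤ x - 1` at `x = qX qY / qXY`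
  have hlog : ∀ ω, p ω * (1 - qX (X ω) * qY (Y ω) / qXY (X ω, Y ω)) ≤
      p ω * (Real.log (qXY (X ω, Y ω)) - Real.log (qX (X ω)) - Real.log (qY (Y ω))) := by
    intro ω
    rcases (hp0 ω).eq_or_lt with hpω | hpω
    · simp [← hpω]
    have hX := prEq_pos hp0 X hpω.ne'
    have hY := prEq_pos hp0 Y hpω.ne'
    have hXY := prEq_pos hp0 (fun ω => (X ω, Y ω)) hpω.ne'
    have h := Real.log_le_sub_one_of_pos (div_pos (mul_pos hX hY) hXY)
    rw [Real.log_div (mul_pos hX hY).ne' hXY.ne', Real.log_mul hX.ne' hY.ne'] at h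
    exact mul_le_mul_of_nonneg_left (by linarith) hpω.le
  have hsum := sum_le_sum fun ω (_ : ω ∈ univ) => hlog ω
  simp only [mul_sub, mul_one, sum_sub_distrib, hp1] at hsum
  simp only [entropy]
  linarith

lemma condEntropy_le_entropy (hp0 : ∀ ω, 0 ≤ p ω) (hp1 : ∑ ω, p ω = 1) (X : Ω → S) (Y : Ω → T) :
    condEntropy p X Y ≤ entropy p X := by
  rw [condEntropy, sub_le_iff_le_add]
  exact entropy_pair_le_add hp0 hp1 X Y

lemma condEntropy_le_condEntropy_pair (hp0 : ∀ ω, 0 ≤ p ω) (A : Ω → S) (B : Ω → T) (C : Ω → R) :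
    condEntropy p A C ≤ condEntropy p (fun ω => (A ω, B ω)) C :=
  sub_le_sub_right (entropy_le_of_determinedermined hp0 fun _ _ h => by
    simp only [Prod.ext_iff] at h ⊢
    exact ⟨h.1.1, h.2⟩) _

lemma condEntropy_pair (A : Ω → S) (B : Ω → T) (C : Ω → R) :
    condEntropy p (fun ω => (A ω, B ω)) C
      = condEntropy p B C + condEntropy p A (fun ω => (B ω, C ω)) := by
  have hassoc : entropy p (fun ω => ((A ω, B ω), C ω)) = entropy p (fun ω => (A ω, B ω, C ω)) :=
    entropy_congr fun _ _ => by simp only [Prod.ext_iff, and_assoc]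
  rw [condEntropy, condEntropy, condEntropy, hassoc]
  ring

def DeterminedBy (p : Ω → ℝ) (X : Ω → S) (Y : Ω → T) : Prop :=
  ∀ ω, p ω ≠ 0 → ∀ ω', p ω' ≠ 0 → Y ω' = Y ω → X ω' = X ω

lemma prEq_pair_eq_iff (hp0 : ∀ ω, 0 ≤ p ω) (X : Ω → S) (Y : Ω → T) (ω : Ω) :
    prEq p (fun ω => (X ω, Y ω)) (X ω, Y ω) = prEq p Y (Y ω) ↔
      ∀ ω', p ω' ≠ 0 → Y ω' = Y ω → X ω' = X ω := by
  rw [prEq, prEq, sum_eq_sum_iff_of_le fun ω' _ => ?_]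
  · refine forall_congr' fun ω' => ?_
    by_cases hY : Y ω' = Y ω <;> by_cases hX : X ω' = X ω <;> simp [hX, hY, @eq_comm ℝ 0]
  · split_ifs <;> simp_all

lemma condEntropy_eq_sum (X : Ω → S) (Y : Ω → T) :
    condEntropy p X Y = ∑ ω, p ω *
      (Real.log (prEq p Y (Y ω)) - Real.log (prEq p (fun ω => (X ω, Y ω)) (X ω, Y ω))) := by
  simp only [condEntropy, entropy, mul_sub, sum_sub_distrib]
  ring

lemma condEntropy_eq_zero_iff (hp0 : ∀ ω, 0 ≤ p ω) (X : Ω → S) (Y : Ω → T) :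
    condEntropy p X Y = 0 ↔ DeterminedBy p X Y := by
  have hterm : ∀ ω, 0 ≤ p ω *
      (Real.log (prEq p Y (Y ω)) - Real.log (prEq p (fun ω => (X ω, Y ω)) (X ω, Y ω))) := by
    intro ω
    rcases (hp0 ω).eq_or_lt with hpω | hpω
    · simp [← hpω]
    exact mul_nonneg hpω.le (sub_nonneg.2 (Real.log_le_log (prEq_pos hp0 _ hpω.ne')
      (prEq_mono hp0 fun _ h => congrArg Prod.snd h)))
  rw [condEntropy_eq_sum, sum_eq_zero_iff_of_nonneg fun ω _ => hterm ω]
  refine forall_congr' fun ω => ?_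
  by_cases hω : p ω = 0
  · simp [hω]
  rw [mul_eq_zero, sub_eq_zero, Real.log_injOn_pos.eq_iff (prEq_pos hp0 Y hω)
    (prEq_pos hp0 _ hω), eq_comm (a := prEq p Y (Y ω)), prEq_pair_eq_iff hp0]
  simp [hω]

lemma eq_of_condEntropy_eq_zero (hp0 : ∀ ω, 0 ≤ p ω) {X : Ω → S} {Y : Ω → T} {ω ω' : Ω}
    (hω : p ω ≠ 0) (hω' : p ω' ≠ 0) (h : condEntropy p X Y = 0) (hY : Y ω' = Y ω) :
    X ω' = X ω :=
  (condEntropy_eq_zero_iff hp0 X Y).1 h ω hω ω' hω' hY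

lemma condEntropy_le_entropy_of_condEntropy_pair_eq_zero (hp0 : ∀ ω, 0 ≤ p ω)
    (hp1 : ∑ ω, p ω = 1) {A : Ω → S} {C : Ω → T} (D : Ω → R)
    (h : condEntropy p A (fun ω => (D ω, C ω)) = 0) : condEntropy p A C ≤ entropy p D :=
  calc condEntropy p A C ≤ condEntropy p (fun ω => (A ω, D ω)) C :=
        condEntropy_le_condEntropy_pair hp0 A D C
    _ = condEntropy p D C := by rw [condEntropy_pair, h, add_zero]
    _ ≤ entropy p D := condEntropy_le_entropy hp0 hp1 D C

end Entropy

section Tuple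

variable {Ω ι : Type*} {S : ι → Type*}

lemma tupleOn_eq_iff (Z : (i : ι) → Ω → S i) (A : Finset ι) (ω ω' : Ω) :
    tupleOn Z A ω' = tupleOn Z A ω ↔ ∀ i ∈ A, Z i ω' = Z i ω :=
  ⟨fun h i hi => congrFun h ⟨i, hi⟩, fun h => funext fun i => h i.1 i.2⟩

variable [Fintype Ω] {p : Ω → ℝ}

lemma entropy_tupleOn_le_sum (hp0 : ∀ ω, 0 ≤ p ω) (hp1 : ∑ ω, p ω = 1)
    (Z : (i : ι) → Ω → S i) (A : Finset ι) :
    entropy p (tupleOn Z A) ≤ ∑ i ∈ A, entropy p (Z i) := by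
  classical
  induction A using Finset.induction with
  | empty =>
    rw [sum_empty,
      entropy_eq_zero_of_const hp1 fun _ _ => funext fun i => absurd i.2 (notMem_empty _)]
  | @insert a A ha ih =>
    have hsplit : entropy p (tupleOn Z (insert a A)) =
        entropy p (fun ω => (Z a ω, tupleOn Z A ω)) :=
      entropy_congr fun ω ω' => by simp only [tupleOn_eq_iff, Prod.ext_iff, forall_mem_insert]
    rw [hsplit, sum_insert ha]
    linarith [entropy_pair_le_add hp0 hp1 (Z a) (tupleOn Z A)]

lemma eq_of_condEntropy_tupleOn_eq_zero {κ : Type*} {T : κ → Type*} (hp0 : ∀ ω, 0 ≤ p ω)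
    {ω ω' : Ω} (hω : p ω ≠ 0) (hω' : p ω' ≠ 0) {Z : (i : ι) → Ω → S i} {Y : (j : κ) → Ω → T j}
    {A : Finset ι} {B : Finset κ} (h : condEntropy p (tupleOn Z A) (tupleOn Y B) = 0)
    (hY : ∀ j ∈ B, Y j ω' = Y j ω) : ∀ i ∈ A, Z i ω' = Z i ω :=
  (tupleOn_eq_iff Z A ω ω').1 <| eq_of_condEntropy_eq_zero hp0 hω hω' h <|
    (tupleOn_eq_iff Y B ω ω').2 hY

lemma entropy_tupleOn_le_sum_of_le (hp0 : ∀ ω, 0 ≤ p ω) (hp1 : ∑ ω, p ω = 1)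
    (Z : (i : ι) → Ω → S i) (A : Finset ι) {c : ι → ℝ} (hc : ∀ i, entropy p (Z i) ≤ c i) :
    entropy p (tupleOn Z A) ≤ ∑ i ∈ A, c i :=
  (entropy_tupleOn_le_sum hp0 hp1 Z A).trans (sum_le_sum fun i _ => hc i)

lemma entropy_tupleOn_pair_sdiff [Fintype ι] [DecidableEq ι] (Z : (i : ι) → Ω → S i)
    (A : Finset ι) :
    entropy p (fun ω => (tupleOn Z A ω, tupleOn Z (univ \ A) ω)) = entropy p (tupleOn Z univ) :=
  entropy_congr fun ω ω' => by
    simp only [Prod.ext_iff, tupleOn_eq_iff, mem_sdiff, mem_univ, true_and, true_implies]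
    exact ⟨fun h i => by_cases (h.1 i) (h.2 i), fun h => ⟨fun i _ => h i, fun i _ => h i⟩⟩

lemma sum_entropy_le_condEntropy_tupleOn [Fintype ι] [DecidableEq ι] (hp0 : ∀ ω, 0 ≤ p ω)
    (hp1 : ∑ ω, p ω = 1) (Z : (i : ι) → Ω → S i)
    (hindep : entropy p (tupleOn Z univ) = ∑ i, entropy p (Z i)) (A : Finset ι) :
    ∑ i ∈ A, entropy p (Z i) ≤ condEntropy p (tupleOn Z A) (tupleOn Z (univ \ A)) := by
  rw [condEntropy, entropy_tupleOn_pair_sdiff, hindep, ← sum_sdiff (subset_univ A)]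
  linarith [entropy_tupleOn_le_sum hp0 hp1 Z (univ \ A)]

end Tuple

section Conversion

variable {gI gF r l μ lam : ℕ}

/-- Node indices are `(initial codeword, local group, position)`. -/
def localGroup (t : Fin lam) (g : Fin μ) (n : ℕ) : Finset (Fin lam × Fin μ × Fin n) :=
  univ.map ((Function.Embedding.sectR g _).trans (Function.Embedding.sectR t _))

lemma mem_localGroup {t : Fin lam} {g : Fin μ} {n : ℕ} {a : Fin lam × Fin μ × Fin n} :
    a ∈ localGroup t g n ↔ a.1 = t ∧ a.2.1 = g := by
  obtain ⟨_, _, _⟩ := a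
  simp [localGroup, eq_comm, and_comm]

lemma card_localGroup (t : Fin lam) (g : Fin μ) (n : ℕ) : (localGroup t g n).card = n := by
  simp [localGroup]

variable {Ω : Type*} [Fintype Ω] {p : Ω → ℝ}
  {SX : Fin lam × Fin μ × Fin r → Type*} {SL : Fin lam × Fin μ × Fin l → Type*}
  {SGI : Fin lam × Fin gI → Type*} {SGF : Fin gF → Type*}
  {TV : Fin lam × Fin μ × Fin r → Type*} {TU : Fin lam × Fin gI → Type*}
  {TW : Fin lam × Fin μ × Fin l → Type*}

def codewordDownload (V : (x : Fin lam × Fin μ × Fin r) → Ω → TV x)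
    (U : (i : Fin lam × Fin gI) → Ω → TU i) (W : (a : Fin lam × Fin μ × Fin l) → Ω → TW a)
    (t : Fin lam) (ω : Ω) :=
  (tupleOn V (univ.filter fun x => x.1 = t) ω, tupleOn U (univ.filter fun i => i.1 = t) ω,
    tupleOn W (univ.filter fun a => a.1 = t) ω)

lemma entropy_codewordDownload_le (hp0 : ∀ ω, 0 ≤ p ω) (hp1 : ∑ ω, p ω = 1)
    {V : (x : Fin lam × Fin μ × Fin r) → Ω → TV x} {U : (i : Fin lam × Fin gI) → Ω → TU i}
    {W : (a : Fin lam × Fin μ × Fin l) → Ω → TW a}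
    {β : Fin lam × Fin μ × Fin r → ℝ} {σ : Fin lam × Fin gI → ℝ} {δ : Fin lam × Fin μ × Fin l → ℝ}
    (hβ : ∀ x, entropy p (V x) ≤ β x) (hσ : ∀ i, entropy p (U i) ≤ σ i)
    (hδ : ∀ a, entropy p (W a) ≤ δ a) (t : Fin lam) :
    entropy p (codewordDownload V U W t) ≤
      ∑ x with x.1 = t, β x + ∑ i with i.1 = t, σ i + ∑ a with a.1 = t, δ a := by
  have hV := entropy_tupleOn_le_sum_of_le hp0 hp1 V (univ.filter fun x => x.1 = t) hβ
  have hU := entropy_tupleOn_le_sum_of_le hp0 hp1 U (univ.filter fun i => i.1 = t) hσ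
  have hW := entropy_tupleOn_le_sum_of_le hp0 hp1 W (univ.filter fun a => a.1 = t) hδ
  have hUW := entropy_pair_le_add hp0 hp1 (tupleOn U (univ.filter fun i => i.1 = t))
    (tupleOn W (univ.filter fun a => a.1 = t))
  have hVUW := entropy_pair_le_add hp0 hp1 (tupleOn V (univ.filter fun x => x.1 = t))
    fun ω => (tupleOn U (univ.filter fun i => i.1 = t) ω,
      tupleOn W (univ.filter fun a => a.1 = t) ω)
  exact hVUW.trans (by linarith)

lemma condEntropy_localGroup_codewordDownload_eq_zero (hp0 : ∀ ω, 0 ≤ p ω)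
    {X : (x : Fin lam × Fin μ × Fin r) → Ω → SX x} {L : (a : Fin lam × Fin μ × Fin l) → Ω → SL a}
    {GI : (i : Fin lam × Fin gI) → Ω → SGI i} {GF : (i : Fin gF) → Ω → SGF i}
    {V : (x : Fin lam × Fin μ × Fin r) → Ω → TV x} {U : (i : Fin lam × Fin gI) → Ω → TU i}
    {W : (a : Fin lam × Fin μ × Fin l) → Ω → TW a}
    (hL : ∀ (t : Fin lam) (i : Fin μ),
        condEntropy p (tupleOn L (Finset.univ.filter fun a => a.1 = t ∧ a.2.1 = i))
          (tupleOn X (Finset.univ.filter fun x => x.1 = t ∧ x.2.1 = i)) = 0)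
    (hGI : ∀ t : Fin lam,
        condEntropy p (tupleOn GI (Finset.univ.filter fun i => i.1 = t))
          (tupleOn X (Finset.univ.filter fun x => x.1 = t)) = 0)
    (hopt : ∀ (Q : Finset (Fin gF)) (R : Finset (Fin lam × Fin μ × Fin l))
        (S : Finset (Fin lam × Fin μ × Fin r)),
        Q.card + R.card + S.card ≤ gF + l →
        condEntropy p
          (fun ω => (tupleOn GF Q ω, tupleOn L R ω, tupleOn X S ω))
          (fun ω => (tupleOn GF (Finset.univ \ Q) ω, tupleOn L (Finset.univ \ R) ω,
            tupleOn X (Finset.univ \ S) ω)) = 0)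
    (hV : ∀ x, condEntropy p (V x) (X x) = 0)
    (hU : ∀ i, condEntropy p (U i) (GI i) = 0)
    (hW : ∀ a, condEntropy p (W a) (L a) = 0)
    (hcoord : condEntropy p (tupleOn GF Finset.univ)
        (fun ω => (tupleOn V Finset.univ ω, tupleOn U Finset.univ ω,
          tupleOn W Finset.univ ω)) = 0)
    {t : Fin lam} {g : Fin μ} {S : Finset (Fin lam × Fin μ × Fin r)}
    (hS : S ⊆ localGroup t g r) (hSgF : S.card ≤ gF) :
    condEntropy p (tupleOn X S)
      (fun ω => (codewordDownload V U W t ω, tupleOn X (univ \ S) ω)) = 0 := by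
  rw [condEntropy_eq_zero_iff hp0]
  intro ω hω ω' hω' h
  simp only [codewordDownload, Prod.ext_iff, tupleOn_eq_iff, mem_filter, mem_univ, true_and,
    mem_sdiff] at h
  obtain ⟨⟨hVt, hUt, hWt⟩, hXS⟩ := h
  have hXout : ∀ x, x ∉ localGroup t g r → X x ω' = X x ω := fun x hx => hXS x (hx <| hS ·)
  have hVall : ∀ x, V x ω' = V x ω := fun x =>
    if hx : x.1 = t then hVt x hx
    else eq_of_condEntropy_eq_zero hp0 hω hω' (hV x) (hXout x (hx <| mem_localGroup.1 · |>.1))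
  have hUall : ∀ i, U i ω' = U i ω := fun i =>
    if hi : i.1 = t then hUt i hi
    else eq_of_condEntropy_eq_zero hp0 hω hω' (hU i) <|
      eq_of_condEntropy_tupleOn_eq_zero hp0 hω hω' (hGI i.1)
        (fun x hx => hXout x fun hxg => hi ((mem_filter.1 hx).2 ▸ (mem_localGroup.1 hxg).1))
        i (by simp)
  have hLout : ∀ a, a ∉ localGroup t g l → L a ω' = L a ω := fun a ha =>
    eq_of_condEntropy_tupleOn_eq_zero hp0 hω hω' (hL a.1 a.2.1)
      (fun x hx => hXout x fun hxg => ha <| mem_localGroup.2 <| by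
        rw [← (mem_filter.1 hx).2.1, ← (mem_filter.1 hx).2.2]
        exact mem_localGroup.1 hxg)
      a (by simp)
  have hWall : ∀ a, W a ω' = W a ω := fun a =>
    if ha : a.1 = t then hWt a ha
    else eq_of_condEntropy_eq_zero hp0 hω hω' (hW a) (hLout a (ha <| mem_localGroup.1 · |>.1))
  have hGF : tupleOn GF univ ω' = tupleOn GF univ ω := by
    refine eq_of_condEntropy_eq_zero hp0 hω hω' hcoord ?_
    simp only [Prod.ext_iff, tupleOn_eq_iff]
    exact ⟨fun x _ => hVall x, fun i _ => hUall i, fun a _ => hWall a⟩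
  have hcard : (∅ : Finset (Fin gF)).card + (localGroup t g l).card + S.card ≤ gF + l := by
    rw [card_empty, card_localGroup]
    omega
  refine congrArg (fun v => v.2.2) (eq_of_condEntropy_eq_zero hp0 hω hω' (hopt _ _ _ hcard) ?_)
  simp only [Prod.ext_iff, tupleOn_eq_iff, mem_sdiff, mem_univ, true_and]
  exact ⟨fun i _ => (tupleOn_eq_iff _ _ _ _).1 hGF i (mem_univ i), hLout, hXS⟩

end Conversion

theorem conversion_read_bandwidth_lower_bound_general
    {Ω : Type*} [Fintype Ω] {gI gF r l μ lam : ℕ}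
    {SX : Fin lam × Fin μ × Fin r → Type*}
    {SL : Fin lam × Fin μ × Fin l → Type*}
    {SGI : Fin lam × Fin gI → Type*}
    {SGF : Fin gF → Type*}
    {TV : Fin lam × Fin μ × Fin r → Type*}
    {TU : Fin lam × Fin gI → Type*}
    {TW : Fin lam × Fin μ × Fin l → Type*}
    (p : Ω → ℝ) (hp0 : ∀ ω, 0 ≤ p ω) (hp1 : ∑ ω, p ω = 1)
    (α : ℝ)
    (hμ : 1 ≤ μ)
    (X : (x : Fin lam × Fin μ × Fin r) → Ω → SX x)
    (L : (a : Fin lam × Fin μ × Fin l) → Ω → SL a)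
    (GI : (i : Fin lam × Fin gI) → Ω → SGI i)
    (GF : (i : Fin gF) → Ω → SGF i)
    (V : (x : Fin lam × Fin μ × Fin r) → Ω → TV x)
    (U : (i : Fin lam × Fin gI) → Ω → TU i)
    (W : (a : Fin lam × Fin μ × Fin l) → Ω → TW a)
    (hXindep : entropy p (tupleOn X Finset.univ) = ∑ x, entropy p (X x))
    (hXα : ∀ x, entropy p (X x) = α)
    (hL : ∀ (t : Fin lam) (i : Fin μ),
        condEntropy p (tupleOn L (Finset.univ.filter fun a => a.1 = t ∧ a.2.1 = i))
          (tupleOn X (Finset.univ.filter fun x => x.1 = t ∧ x.2.1 = i)) = 0)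
    (hGI : ∀ t : Fin lam,
        condEntropy p (tupleOn GI (Finset.univ.filter fun i => i.1 = t))
          (tupleOn X (Finset.univ.filter fun x => x.1 = t)) = 0)
    (hopt : ∀ (Q : Finset (Fin gF)) (R : Finset (Fin lam × Fin μ × Fin l))
        (S : Finset (Fin lam × Fin μ × Fin r)),
        Q.card + R.card + S.card ≤ gF + l →
        condEntropy p
          (fun ω => (tupleOn GF Q ω, tupleOn L R ω, tupleOn X S ω))
          (fun ω => (tupleOn GF (Finset.univ \ Q) ω, tupleOn L (Finset.univ \ R) ω,
            tupleOn X (Finset.univ \ S) ω)) = 0)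
    (hV : ∀ x, condEntropy p (V x) (X x) = 0)
    (hU : ∀ i, condEntropy p (U i) (GI i) = 0)
    (hW : ∀ a, condEntropy p (W a) (L a) = 0)
    (hcoord : condEntropy p (tupleOn GF Finset.univ)
        (fun ω => (tupleOn V Finset.univ ω, tupleOn U Finset.univ ω,
          tupleOn W Finset.univ ω)) = 0)
    (β : Fin lam × Fin μ × Fin r → ℝ) (σ : Fin lam × Fin gI → ℝ)
    (δ : Fin lam × Fin μ × Fin l → ℝ)
    (hβ : ∀ x, entropy p (V x) ≤ β x ∧ β x ≤ α)
    (hσ : ∀ i, entropy p (U i) ≤ σ i ∧ σ i ≤ α)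
    (hδ : ∀ a, entropy p (W a) ≤ δ a ∧ δ a ≤ α)
    :
    (∑ x, β x) + (∑ i, σ i) + (∑ a, δ a)
      ≥ (lam : ℝ) * ((min gF r : ℕ) : ℝ) * α := by
  have hcodeword : ∀ t : Fin lam, ((min gF r : ℕ) : ℝ) * α ≤
      ∑ x with x.1 = t, β x + ∑ i with i.1 = t, σ i + ∑ a with a.1 = t, δ a := by
    intro t
    obtain ⟨S, hS, hcard⟩ := exists_subset_card_eq <|
      (min_le_right gF r).trans_eq (card_localGroup t ⟨0, hμ⟩ r).symm
    calc ((min gF r : ℕ) : ℝ) * α = ∑ x ∈ S, entropy p (X x) := by simp [hXα, hcard]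
      _ ≤ condEntropy p (tupleOn X S) (tupleOn X (univ \ S)) :=
        sum_entropy_le_condEntropy_tupleOn hp0 hp1 X hXindep S
      _ ≤ entropy p (codewordDownload V U W t) :=
        condEntropy_le_entropy_of_condEntropy_pair_eq_zero hp0 hp1 _ <|
          condEntropy_localGroup_codewordDownload_eq_zero hp0 hL hGI hopt hV hU hW hcoord hS
            (hcard ▸ min_le_left gF r)
      _ ≤ _ := entropy_codewordDownload_le hp0 hp1 (fun x => (hβ x).1) (fun i => (hσ i).1)
          (fun a => (hδ a).1) t
  calc (lam : ℝ) * ((min gF r : ℕ) : ℝ) * α = ∑ _t : Fin lam, ((min gF r : ℕ) : ℝ) * α := by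
        simp [mul_assoc]
    _ ≤ ∑ t, (∑ x with x.1 = t, β x + ∑ i with i.1 = t, σ i + ∑ a with a.1 = t, δ a) :=
        sum_le_sum fun t _ => hcodeword t
    _ = (∑ x, β x) + (∑ i, σ i) + (∑ a, δ a) := by
        simp only [sum_add_distrib, sum_fiberwise]

/-- In the conversion model with download sizes `β, σ, δ`
(`H(V x) ≤ β x ≤ α`, `H(U i) ≤ σ i ≤ α`, `H(W a) ≤ δ a ≤ α`), the read bandwidth cost
`γ_R = Σ β + Σ σ + Σ δ` satisfies `γ_R ≥ lam · min{gF, r} · α`. -/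
theorem conversion_read_bandwidth_lower_bound
    {Ω : Type*} [Fintype Ω] {kI gI gF r l μ lam : ℕ}
    {SX : Fin lam × Fin μ × Fin r → Type*}
    {SL : Fin lam × Fin μ × Fin l → Type*}
    {SGI : Fin lam × Fin gI → Type*}
    {SGF : Fin gF → Type*}
    {TV : Fin lam × Fin μ × Fin r → Type*}
    {TU : Fin lam × Fin gI → Type*}
    {TW : Fin lam × Fin μ × Fin l → Type*}
    (p : Ω → ℝ) (hp0 : ∀ ω, 0 ≤ p ω) (hp1 : ∑ ω, p ω = 1)
    (α : ℝ) (hα : 0 < α)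
    (hr : 1 ≤ r) (hl : 1 ≤ l) (hμ : 1 ≤ μ) (hlam : 2 ≤ lam) (hk : kI = μ * r)
    (X : (x : Fin lam × Fin μ × Fin r) → Ω → SX x)
    (L : (a : Fin lam × Fin μ × Fin l) → Ω → SL a)
    (GI : (i : Fin lam × Fin gI) → Ω → SGI i)
    (GF : (i : Fin gF) → Ω → SGF i)
    (V : (x : Fin lam × Fin μ × Fin r) → Ω → TV x)
    (U : (i : Fin lam × Fin gI) → Ω → TU i)
    (W : (a : Fin lam × Fin μ × Fin l) → Ω → TW a)
    (hXindep : entropy p (tupleOn X Finset.univ) = ∑ x, entropy p (X x))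
    (hXα : ∀ x, entropy p (X x) = α)
    (hL : ∀ (t : Fin lam) (i : Fin μ),
        condEntropy p (tupleOn L (Finset.univ.filter fun a => a.1 = t ∧ a.2.1 = i))
          (tupleOn X (Finset.univ.filter fun x => x.1 = t ∧ x.2.1 = i)) = 0)
    (hLcap : ∀ a, entropy p (L a) ≤ α)
    (hGI : ∀ t : Fin lam,
        condEntropy p (tupleOn GI (Finset.univ.filter fun i => i.1 = t))
          (tupleOn X (Finset.univ.filter fun x => x.1 = t)) = 0)
    (hGIcap : ∀ i, entropy p (GI i) ≤ α)
    (hGF : condEntropy p (tupleOn GF Finset.univ) (tupleOn X Finset.univ) = 0)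
    (hGFcap : ∀ i, entropy p (GF i) ≤ α)
    (hopt : ∀ (Q : Finset (Fin gF)) (R : Finset (Fin lam × Fin μ × Fin l))
        (S : Finset (Fin lam × Fin μ × Fin r)),
        Q.card + R.card + S.card ≤ gF + l →
        condEntropy p
          (fun ω => (tupleOn GF Q ω, tupleOn L R ω, tupleOn X S ω))
          (fun ω => (tupleOn GF (Finset.univ \ Q) ω, tupleOn L (Finset.univ \ R) ω,
            tupleOn X (Finset.univ \ S) ω)) = 0)
    (hV : ∀ x, condEntropy p (V x) (X x) = 0)
    (hU : ∀ i, condEntropy p (U i) (GI i) = 0)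
    (hW : ∀ a, condEntropy p (W a) (L a) = 0)
    (hcoord : condEntropy p (tupleOn GF Finset.univ)
        (fun ω => (tupleOn V Finset.univ ω, tupleOn U Finset.univ ω,
          tupleOn W Finset.univ ω)) = 0)
    (β : Fin lam × Fin μ × Fin r → ℝ) (σ : Fin lam × Fin gI → ℝ)
    (δ : Fin lam × Fin μ × Fin l → ℝ)
    (hβ : ∀ x, entropy p (V x) ≤ β x ∧ β x ≤ α)
    (hσ : ∀ i, entropy p (U i) ≤ σ i ∧ σ i ≤ α)
    (hδ : ∀ a, entropy p (W a) ≤ δ a ∧ δ a ≤ α)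
    :
    (∑ x, β x) + (∑ i, σ i) + (∑ a, δ a)
      ≥ (lam : ℝ) * ((min gF r : ℕ) : ℝ) * α :=
  conversion_read_bandwidth_lower_bound_general p hp0 hp1 α hμ X L GI GF V U W hXindep hXα hL hGI
    hopt hV hU hW hcoord β σ δ hβ hσ hδ
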